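/- arXiv:2502.17273 — 3 statements merged into one kernel-verified Lean document; each statement's English description precedes it below -/
import Mathlib

section
/- Let H : ℝ → ℝ be continuously differentiable and π-periodic. Then there exists a universal constant K > 0 (independent of H) such that ∫₀^π (H(x) - (1/π)∫₀^π H(y) dy)² dx ≤ K ∫₀^π sin²(x) * (H'(x))² dx. -/
/-!
Subtracting the value `c = H (π/2)` instead of the mean can only increase the left-hand side,
since the mean minimizes `c ↦ ∫ (H - c)²`. The function `u = H - c` vanishes at `π/2`, so on each
half of `[0, π]` the one-dimensional Hardy inequality `∫ u² ≤ 4 ∫ (x - e)² u'²`, with `e` the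
outer endpoint, applies; Jordan's inequality `sin x ≥ 2x/π` bounds `(x - e)²` by `π²/4 · sin² x`.
This gives the inequality with `K = π²`.
-/

open Real intervalIntegral Set

theorem integral_sq_sub_average_le {f : ℝ → ℝ} (hf : Continuous f) {a b : ℝ} (hab : a < b)
    (c : ℝ) :
    ∫ x in a..b, (f x - (1 / (b - a)) * ∫ y in a..b, f y) ^ 2 ≤ ∫ x in a..b, (f x - c) ^ 2 := by
  set m := (1 / (b - a)) * ∫ y in a..b, f y
  have hm : ∫ y in a..b, f y = (b - a) * m := by
    simp only [m]; field_simp [(sub_pos.2 hab).ne']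
  have hdiff :
      (∫ x in a..b, (f x - c) ^ 2) - ∫ x in a..b, (f x - m) ^ 2 = (b - a) * (m - c) ^ 2 := by
    have hint (d : ℝ) : IntervalIntegrable (fun x => (f x - d) ^ 2) MeasureTheory.volume a b :=
      ((hf.sub continuous_const).pow 2).intervalIntegrable _ _
    rw [← integral_sub (hint c) (hint m)]
    calc ∫ x in a..b, ((f x - c) ^ 2 - (f x - m) ^ 2)
        = ∫ x in a..b, (m - c) * (2 * f x - (c + m)) := by
          congr 1; ext x; ring
      _ = (b - a) * (m - c) ^ 2 := by
          rw [integral_const_mul, integral_sub ((hf.intervalIntegrable _ _).const_mul 2)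
            intervalIntegrable_const, integral_const_mul, hm, integral_const, smul_eq_mul]
          ring
  linarith [mul_nonneg (sub_pos.2 hab).le (sq_nonneg (m - c))]

theorem integral_sq_le_four_mul_integral_sq_sub_mul_deriv_sq {u u' : ℝ → ℝ} {a b : ℝ} (e : ℝ)
    (hab : a ≤ b) (hu : ∀ x, HasDerivAt u (u' x) x) (hu' : Continuous u')
    (hbd : (b - e) * u b ^ 2 = (a - e) * u a ^ 2) :
    ∫ x in a..b, u x ^ 2 ≤ 4 * ∫ x in a..b, (x - e) ^ 2 * u' x ^ 2 := by
  have hcont : Continuous u := continuous_iff_continuousAt.2 fun x => (hu x).continuousAt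
  have hi1 : IntervalIntegrable (fun x => u x ^ 2) MeasureTheory.volume a b :=
    (hcont.pow 2).intervalIntegrable _ _
  have hi2 : IntervalIntegrable (fun x => (x - e) * u x * u' x) MeasureTheory.volume a b :=
    (((continuous_id.sub continuous_const).mul hcont).mul hu').intervalIntegrable _ _
  have hi3 : IntervalIntegrable (fun x => (x - e) ^ 2 * u' x ^ 2) MeasureTheory.volume a b :=
    (((continuous_id.sub continuous_const).pow 2).mul (hu'.pow 2)).intervalIntegrable _ _
  -- integration by parts against `(x - e) u²`, whose boundary terms cancel
  have hparts : (∫ x in a..b, u x ^ 2) + 2 * ∫ x in a..b, (x - e) * u x * u' x = 0 := by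
    rw [← integral_const_mul, ← integral_add hi1 (hi2.const_mul 2),
      integral_eq_sub_of_hasDerivAt (f := fun x => (x - e) * u x ^ 2)
        (fun x _ => (((hasDerivAt_id x).sub_const e).mul ((hu x).pow 2)).congr_deriv (by
          simp only [id_eq, Pi.pow_apply, Nat.cast_ofNat]; ring))
        (hi1.add (hi2.const_mul 2)), hbd, sub_self]
  have hsq : 0 ≤ ∫ x in a..b, (u x + 2 * (x - e) * u' x) ^ 2 :=
    integral_nonneg hab fun x _ => sq_nonneg _
  have hexpand : ∫ x in a..b, (u x + 2 * (x - e) * u' x) ^ 2 = (∫ x in a..b, u x ^ 2)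
      + 4 * (∫ x in a..b, (x - e) * u x * u' x) + 4 * ∫ x in a..b, (x - e) ^ 2 * u' x ^ 2 := by
    rw [← integral_const_mul, ← integral_const_mul, ← integral_add hi1 (hi2.const_mul 4),
      ← integral_add (hi1.add (hi2.const_mul 4)) (hi3.const_mul 4)]
    congr 1; ext x; ring
  linarith

theorem sq_le_pi_sq_div_four_mul_sin_sq {x : ℝ} (hx₀ : 0 ≤ x) (hx : x ≤ π / 2) :
    x ^ 2 ≤ π ^ 2 / 4 * sin x ^ 2 := by
  have hjordan : (2 / π * x) ^ 2 ≤ sin x ^ 2 :=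
    pow_le_pow_left₀ (by positivity) (mul_le_sin hx₀ hx) 2
  calc x ^ 2 = π ^ 2 / 4 * (2 / π * x) ^ 2 := by field_simp; ring
    _ ≤ π ^ 2 / 4 * sin x ^ 2 := by gcongr

theorem sq_sub_pi_le_pi_sq_div_four_mul_sin_sq {x : ℝ} (hx : π / 2 ≤ x) (hxπ : x ≤ π) :
    (x - π) ^ 2 ≤ π ^ 2 / 4 * sin x ^ 2 := by
  have h := sq_le_pi_sq_div_four_mul_sin_sq (x := π - x) (by linarith) (by linarith)
  rwa [sin_pi_sub, ← neg_sub, neg_sq] at h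

theorem integral_sq_le_pi_sq_mul_integral_sin_sq_mul_deriv_sq {u u' : ℝ → ℝ} {a b : ℝ} (e : ℝ)
    (hab : a ≤ b) (hu : ∀ x, HasDerivAt u (u' x) x) (hu' : Continuous u')
    (hbd : (b - e) * u b ^ 2 = (a - e) * u a ^ 2)
    (hweight : ∀ x ∈ Icc a b, (x - e) ^ 2 ≤ π ^ 2 / 4 * sin x ^ 2) :
    ∫ x in a..b, u x ^ 2 ≤ π ^ 2 * ∫ x in a..b, sin x ^ 2 * u' x ^ 2 := by
  calc ∫ x in a..b, u x ^ 2 ≤ 4 * ∫ x in a..b, (x - e) ^ 2 * u' x ^ 2 :=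
        integral_sq_le_four_mul_integral_sq_sub_mul_deriv_sq e hab hu hu' hbd
    _ ≤ 4 * ∫ x in a..b, π ^ 2 / 4 * (sin x ^ 2 * u' x ^ 2) := by
        gcongr
        refine integral_mono_on hab ?_ ?_ fun x hx => ?_
        · exact (((continuous_id.sub continuous_const).pow 2).mul
            (hu'.pow 2)).intervalIntegrable _ _
        · exact ((continuous_const.mul ((continuous_sin.pow 2).mul
            (hu'.pow 2)))).intervalIntegrable _ _
        · rw [← mul_assoc]
          exact mul_le_mul_of_nonneg_right (hweight x hx) (sq_nonneg _)
    _ = π ^ 2 * ∫ x in a..b, sin x ^ 2 * u' x ^ 2 := by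
        rw [integral_const_mul]; ring

theorem integral_sq_le_pi_sq_mul_integral_sin_sq_mul_deriv_sq_of_eq_zero {u u' : ℝ → ℝ}
    (hu : ∀ x, HasDerivAt u (u' x) x) (hu' : Continuous u') (hu₀ : u (π / 2) = 0) :
    ∫ x in (0 : ℝ)..π, u x ^ 2 ≤ π ^ 2 * ∫ x in (0 : ℝ)..π, sin x ^ 2 * u' x ^ 2 := by
  have hcont : Continuous u := continuous_iff_continuousAt.2 fun x => (hu x).continuousAt
  have hleft := integral_sq_le_pi_sq_mul_integral_sin_sq_mul_deriv_sq (a := 0) (b := π / 2) 0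
    (by linarith [pi_pos]) hu hu' (by rw [hu₀]; ring)
    fun x hx => by simpa using sq_le_pi_sq_div_four_mul_sin_sq hx.1 hx.2
  have hright := integral_sq_le_pi_sq_mul_integral_sin_sq_mul_deriv_sq (a := π / 2) (b := π) π
    (by linarith [pi_pos]) hu hu' (by rw [hu₀]; ring)
    fun x hx => sq_sub_pi_le_pi_sq_div_four_mul_sin_sq hx.1 hx.2
  rw [← integral_add_adjacent_intervals (f := fun x => u x ^ 2) (b := π / 2)
      ((hcont.pow 2).intervalIntegrable _ _)
      ((hcont.pow 2).intervalIntegrable _ _),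
    ← integral_add_adjacent_intervals (f := fun x => sin x ^ 2 * u' x ^ 2) (b := π / 2)
      (((continuous_sin.pow 2).mul (hu'.pow 2)).intervalIntegrable _ _)
      (((continuous_sin.pow 2).mul (hu'.pow 2)).intervalIntegrable _ _)]
  linarith

open Real in
theorem stmt3 :
    ∃ K > 0, ∀ H : ℝ → ℝ, ContDiff ℝ 1 H → Function.Periodic H π →
      ∫ x in (0:ℝ)..π, (H x - (1/π) * ∫ y in (0:ℝ)..π, H y)^2
        ≤ K * ∫ x in (0:ℝ)..π, Real.sin x ^ 2 * (deriv H x)^2 := by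
  refine ⟨π ^ 2, by positivity, fun H hH _ => ?_⟩
  have hHd : Differentiable ℝ H := hH.differentiable one_ne_zero
  have hmean := integral_sq_sub_average_le hHd.continuous pi_pos (H (π / 2))
  rw [sub_zero] at hmean
  exact hmean.trans <| integral_sq_le_pi_sq_mul_integral_sin_sq_mul_deriv_sq_of_eq_zero
    (u := fun x => H x - H (π / 2)) (fun x => (hHd x).hasDerivAt.sub_const _)
    (hH.continuous_deriv le_rfl) (sub_self _)
end

section
/- Let h : ℝ → ℝ be continuously differentiable on [0, π/2]. Then there exists a universal constant K > 0 such that ∫₀^{π/2} (h(x) - h(π/2))² dx ≤ K ∫₀^{π/2} sin²(x) * (h'(x))² dx. -/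
/-!
Integrating the derivative of `x (h x - h a)²` over `[0, a]` gives
`∫ (h - h a)² = -∫ 2x (h - h a) h'`, the boundary terms vanishing at both ends.
Bounding the right side by AM-GM and absorbing half of `∫ (h - h a)²` yields the Hardy
inequality `∫ (h - h a)² ≤ 4 ∫ x² h'²`, and Jordan's inequality `x ≤ (π/2) sin x` on
`[0, π/2]` turns the weight `x²` into `sin² x`.
-/

open Real Set intervalIntegral

section Hardy

variable {a : ℝ} {h h' : ℝ → ℝ}

theorem integral_sq_sub_eq_neg_integral_mul_deriv (ha : 0 ≤ a)
    (hcont : ContinuousOn h (Icc 0 a)) (hderiv : ∀ x ∈ Ioo 0 a, HasDerivAt h (h' x) x)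
    (hh' : ContinuousOn h' (Icc 0 a)) :
    ∫ x in 0..a, (h x - h a) ^ 2 = -∫ x in 0..a, x * (2 * (h x - h a) * h' x) := by
  have hF : ∀ x ∈ Ioo 0 a, HasDerivAt (fun x => x * (h x - h a) ^ 2)
      ((h x - h a) ^ 2 + x * (2 * (h x - h a) * h' x)) x := by
    intro x hx
    have hpow : HasDerivAt (fun x => (h x - h a) ^ 2) (2 * (h x - h a) * h' x) x := by
      simpa [mul_comm, mul_assoc] using ((hderiv x hx).sub_const (h a)).fun_pow 2
    simpa using (hasDerivAt_id' x).fun_mul hpow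
  have hFTC := integral_eq_sub_of_hasDerivAt_of_le ha (by fun_prop) hF
    (ContinuousOn.intervalIntegrable_of_Icc ha (by fun_prop))
  rw [integral_add (ContinuousOn.intervalIntegrable_of_Icc ha (by fun_prop))
    (ContinuousOn.intervalIntegrable_of_Icc ha (by fun_prop))] at hFTC
  simp only [sub_self, ne_eq, OfNat.ofNat_ne_zero, not_false_eq_true, zero_pow, mul_zero,
    zero_mul] at hFTC
  linarith

theorem integral_sq_sub_le_four_mul_integral_sq_mul_sq_deriv (ha : 0 ≤ a)
    (hcont : ContinuousOn h (Icc 0 a)) (hderiv : ∀ x ∈ Ioo 0 a, HasDerivAt h (h' x) x)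
    (hh' : ContinuousOn h' (Icc 0 a)) :
    ∫ x in 0..a, (h x - h a) ^ 2 ≤ 4 * ∫ x in 0..a, x ^ 2 * h' x ^ 2 := by
  have hamgm : ∫ x in 0..a, -(x * (2 * (h x - h a) * h' x))
      ≤ ∫ x in 0..a, (1 / 2 * (h x - h a) ^ 2 + 2 * (x ^ 2 * h' x ^ 2)) := by
    refine integral_mono_on ha (ContinuousOn.intervalIntegrable_of_Icc ha (by fun_prop))
      (ContinuousOn.intervalIntegrable_of_Icc ha (by fun_prop)) fun x _ => ?_
    nlinarith [sq_nonneg (h x - h a + 2 * x * h' x)]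
  rw [integral_neg, integral_add (ContinuousOn.intervalIntegrable_of_Icc ha (by fun_prop))
    (ContinuousOn.intervalIntegrable_of_Icc ha (by fun_prop)), integral_const_mul,
    integral_const_mul, ← integral_sq_sub_eq_neg_integral_mul_deriv ha hcont hderiv hh'] at hamgm
  linarith

end Hardy

theorem sq_le_sq_pi_div_two_mul_sq_sin {x : ℝ} (hx0 : 0 ≤ x) (hx : x ≤ π / 2) :
    x ^ 2 ≤ (π / 2) ^ 2 * sin x ^ 2 := by
  have hjordan : x ≤ π / 2 * sin x :=
    calc x = π / 2 * (2 / π * x) := by field_simp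
      _ ≤ π / 2 * sin x := by gcongr; exact mul_le_sin hx0 hx
  rw [← mul_pow]
  exact pow_le_pow_left₀ hx0 hjordan 2

open Real in
theorem stmt4 :
    ∃ K > 0, ∀ h : ℝ → ℝ, ContDiffOn ℝ 1 h (Set.Icc 0 (π/2)) →
      ∫ x in (0:ℝ)..(π/2), (h x - h (π/2))^2
        ≤ K * ∫ x in (0:ℝ)..(π/2),
            Real.sin x ^ 2 * (derivWithin h (Set.Icc 0 (π/2)) x)^2 := by
  refine ⟨π ^ 2, by positivity, fun h hh => ?_⟩
  have hπ : (0 : ℝ) < π / 2 := by positivity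
  set h' := derivWithin h (Icc 0 (π / 2))
  have hh' : ContinuousOn h' (Icc 0 (π / 2)) :=
    hh.continuousOn_derivWithin (uniqueDiffOn_Icc hπ) le_rfl
  have hderiv : ∀ x ∈ Ioo 0 (π / 2), HasDerivAt h (h' x) x := fun x hx =>
    (hh.differentiableOn one_ne_zero x (Ioo_subset_Icc_self hx)).hasDerivWithinAt.hasDerivAt
      (Icc_mem_nhds hx.1 hx.2)
  calc ∫ x in 0..π / 2, (h x - h (π / 2)) ^ 2
      ≤ 4 * ∫ x in 0..π / 2, x ^ 2 * h' x ^ 2 :=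
        integral_sq_sub_le_four_mul_integral_sq_mul_sq_deriv hπ.le hh.continuousOn hderiv hh'
    _ ≤ 4 * ∫ x in 0..π / 2, (π / 2) ^ 2 * (sin x ^ 2 * h' x ^ 2) := by
        gcongr
        refine integral_mono_on hπ.le
          (ContinuousOn.intervalIntegrable_of_Icc hπ.le (by fun_prop))
          (ContinuousOn.intervalIntegrable_of_Icc hπ.le (by fun_prop)) fun x hx => ?_
        rw [← mul_assoc]
        exact mul_le_mul_of_nonneg_right (sq_le_sq_pi_div_two_mul_sq_sin hx.1 hx.2) (sq_nonneg _)
    _ = π ^ 2 * ∫ x in 0..π / 2, sin x ^ 2 * h' x ^ 2 := by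
        rw [integral_const_mul]; ring
end

section
/- Let ω : ℝ² → ℝ be continuous on the 2-torus (i.e. 2π-periodic in each variable), and suppose there exist finitely many points Y₁,…,Y_N in the torus, a radius r > 0 and constants 0 < c ≤ C such that: (i) c·|y − Yᵢ| ≤ |ω(y)| ≤ C·|y − Yᵢ| (with periodic distance) for y within distance r of each Yᵢ, and (ii) c ≤ |ω(y)| ≤ C for y at distance at least r from all the Yᵢ. Then there exists a constant K > 0 such that for every smooth 2π-periodic g : ℝ² → ℝ, ∫_{T²} g² dy ≤ K ( ∫_{T²} ω² g² dy + ∫_{T²} |∇g|² dy ). -/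
open Real MeasureTheory

/-- Periodic distance on the 2-torus of side `2π`, seen on `ℝ²`. -/
noncomputable def perDist (y z : EuclideanSpace ℝ (Fin 2)) : ℝ :=
  ⨅ k : ℤ × ℤ, ‖y - z - (2 * π * (k.1 : ℝ)) • (EuclideanSpace.single 0 (1:ℝ))
      - (2 * π * (k.2 : ℝ)) • (EuclideanSpace.single 1 (1:ℝ))‖

/-- The fundamental domain `[0,2π]²`. -/
def fundDom2 : Set (EuclideanSpace ℝ (Fin 2)) :=
  {y | ∀ i : Fin 2, y i ∈ Set.Icc (0:ℝ) (2 * π)}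

/-! ### Auxiliary definitions and lemmas -/

noncomputable abbrev ee (i : Fin 2) : EuclideanSpace ℝ (Fin 2) := EuclideanSpace.single i (1:ℝ)

noncomputable def pt (a b : ℝ) : EuclideanSpace ℝ (Fin 2) := a • ee 0 + b • ee 1

lemma pt_apply0 (a b : ℝ) : pt a b 0 = a := by simp [pt, EuclideanSpace.single_apply]
lemma pt_apply1 (a b : ℝ) : pt a b 1 = b := by simp [pt, EuclideanSpace.single_apply]

lemma pt_coords (y : EuclideanSpace ℝ (Fin 2)) : pt (y 0) (y 1) = y := by
  ext i
  fin_cases i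
  · exact pt_apply0 _ _
  · exact pt_apply1 _ _

lemma pt_cont_snd (a : ℝ) : Continuous (fun t => pt a t) := by
  unfold pt; fun_prop

lemma hasDerivAt_pt_snd (a b : ℝ) : HasDerivAt (fun t => pt a t) (ee 1) b := by
  unfold pt
  simpa using ((hasDerivAt_id b).smul_const (ee 1)).const_add (a • ee 0)

lemma abs_coord_le_norm (v : EuclideanSpace ℝ (Fin 2)) (i : Fin 2) : |v i| ≤ ‖v‖ := by
  rw [EuclideanSpace.norm_eq]
  rw [show |v i| = Real.sqrt ((v i)^2) by rw [Real.sqrt_sq_eq_abs]]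
  apply Real.sqrt_le_sqrt
  calc (v i)^2 ≤ ∑ j, (v j)^2 :=
        Finset.single_le_sum (f := fun j => (v j)^2) (fun j _ => sq_nonneg _) (Finset.mem_univ i)
    _ = ∑ j, ‖v j‖^2 := by simp [Real.norm_eq_abs, sq_abs]

lemma perDist_bdd (y z : EuclideanSpace ℝ (Fin 2)) :
    BddBelow (Set.range fun k : ℤ × ℤ => ‖y - z - (2 * π * (k.1 : ℝ)) • (EuclideanSpace.single 0 (1:ℝ))
      - (2 * π * (k.2 : ℝ)) • (EuclideanSpace.single 1 (1:ℝ))‖) :=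
  ⟨0, by rintro x ⟨k, rfl⟩; exact norm_nonneg _⟩

lemma perDist_exists_lt {y z : EuclideanSpace ℝ (Fin 2)} {ρ : ℝ} (h : perDist y z < ρ) :
    ∃ k : ℤ × ℤ, ‖y - z - (2 * π * (k.1 : ℝ)) • (EuclideanSpace.single 0 (1:ℝ))
      - (2 * π * (k.2 : ℝ)) • (EuclideanSpace.single 1 (1:ℝ))‖ < ρ :=
  exists_lt_of_ciInf_lt h

lemma perDist_lipschitz (z : EuclideanSpace ℝ (Fin 2)) :
    ∀ y x, perDist y z ≤ perDist x z + ‖y - x‖ := by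
  intro y x
  have h1 : ∀ k : ℤ × ℤ, perDist y z - ‖y - x‖ ≤ ‖x - z - (2 * π * (k.1 : ℝ)) • (EuclideanSpace.single 0 (1:ℝ))
      - (2 * π * (k.2 : ℝ)) • (EuclideanSpace.single 1 (1:ℝ))‖ := by
    intro k
    have h2 := ciInf_le (perDist_bdd y z) k
    have h3 : ‖y - z - (2 * π * (k.1 : ℝ)) • (EuclideanSpace.single 0 (1:ℝ))
      - (2 * π * (k.2 : ℝ)) • (EuclideanSpace.single 1 (1:ℝ))‖ ≤ ‖x - z - (2 * π * (k.1 : ℝ)) • (EuclideanSpace.single 0 (1:ℝ))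
      - (2 * π * (k.2 : ℝ)) • (EuclideanSpace.single 1 (1:ℝ))‖ + ‖y - x‖ := by
      have heq : y - z - (2 * π * (k.1 : ℝ)) • (EuclideanSpace.single 0 (1:ℝ))
      - (2 * π * (k.2 : ℝ)) • (EuclideanSpace.single 1 (1:ℝ)) = (x - z - (2 * π * (k.1 : ℝ)) • (EuclideanSpace.single 0 (1:ℝ))
      - (2 * π * (k.2 : ℝ)) • (EuclideanSpace.single 1 (1:ℝ))) + (y - x) := by abel
      rw [heq]; exact norm_add_le _ _
    unfold perDist
    unfold perDist at h2
    linarith [le_trans h2 h3]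
  have := le_ciInf h1
  unfold perDist at *
  linarith [this]

lemma perDist_continuous (z : EuclideanSpace ℝ (Fin 2)) :
    Continuous (fun y => perDist y z) := by
  have : LipschitzWith 1 (fun y => perDist y z) := by
    apply LipschitzWith.of_dist_le_mul
    intro y x
    rw [Real.dist_eq, NNReal.coe_one, one_mul, abs_le]
    constructor
    · have := perDist_lipschitz z x y
      rw [dist_eq_norm, show ‖y - x‖ = ‖x - y‖ from norm_sub_rev _ _]
      linarith
    · have := perDist_lipschitz z y x
      rw [dist_eq_norm]
      linarith
  exact this.continuous

/-! ### 1D Cauchy–Schwarz and FTC bounds -/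

lemma cs_interval (φ : ℝ → ℝ) (hφ : Continuous φ) {a b : ℝ} (hab : a ≤ b) :
    (∫ u in a..b, φ u)^2 ≤ (b - a) * ∫ u in a..b, (φ u)^2 := by
  set I := ∫ u in a..b, φ u with hI
  set J := ∫ u in a..b, (φ u)^2 with hJ
  have hφ2 : Continuous (fun u => (φ u)^2) := by fun_prop
  have inner : ∀ u : ℝ, ∫ v in a..b, (φ u - φ v)^2 = (b-a) * (φ u)^2 - 2 * φ u * I + J := by
    intro u
    have : ∀ v : ℝ, (φ u - φ v)^2 = (φ u)^2 - (2 * φ u) * φ v + (φ v)^2 := by intro v; ring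
    rw [intervalIntegral.integral_congr (fun v _ => this v)]
    rw [intervalIntegral.integral_add (f := fun v => (φ u)^2 - (2 * φ u) * φ v) (g := fun v => (φ v)^2) (((continuous_const.sub (continuous_const.mul hφ)).intervalIntegrable a b)) (hφ2.intervalIntegrable a b)]
    rw [intervalIntegral.integral_sub (f := fun _ => (φ u)^2) (g := fun v => (2 * φ u) * φ v) (intervalIntegrable_const) ((continuous_const.mul hφ).intervalIntegrable a b)]
    rw [intervalIntegral.integral_const, intervalIntegral.integral_const_mul]
    ring_nf
    rw [← hI, ← hJ]
  have h0 : 0 ≤ ∫ u in a..b, ∫ v in a..b, (φ u - φ v)^2 := by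
    apply intervalIntegral.integral_nonneg hab
    intro u _
    apply intervalIntegral.integral_nonneg hab
    intro v _
    positivity
  rw [intervalIntegral.integral_congr (fun u _ => inner u)] at h0
  have hInt1 : IntervalIntegrable (fun u => (b-a) * (φ u)^2 - 2 * φ u * I) MeasureTheory.volume a b := by
    apply IntervalIntegrable.sub
    · exact (continuous_const.mul hφ2).intervalIntegrable a b
    · exact ((continuous_const.mul hφ).mul continuous_const).intervalIntegrable a b
  rw [intervalIntegral.integral_add hInt1 intervalIntegrable_const] at h0
  rw [intervalIntegral.integral_sub (f := fun u => (b-a) * (φ u)^2) (g := fun u => 2 * φ u * I) ((continuous_const.mul hφ2).intervalIntegrable a b)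
    (((continuous_const.mul hφ).mul continuous_const).intervalIntegrable a b)] at h0
  rw [intervalIntegral.integral_const, intervalIntegral.integral_const_mul] at h0
  have e1 : ∫ u in a..b, 2 * φ u * I = 2 * I * I := by
    rw [show (fun u => 2 * φ u * I) = (fun u => (2*I) * φ u) by funext u; ring]
    rw [intervalIntegral.integral_const_mul]
  rw [e1, smul_eq_mul] at h0
  nlinarith [h0]

lemma ftc_bound (h h' : ℝ → ℝ) (hc : Continuous h') (hd : ∀ t, HasDerivAt h (h' t) t)
    {L : ℝ} (hL : 0 ≤ L) {s t : ℝ} (hs : s ∈ Set.Icc 0 L) (ht : t ∈ Set.Icc 0 L) :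
    (h t)^2 ≤ 2 * (h s)^2 + 2 * L * ∫ u in (0:ℝ)..L, (h' u)^2 := by
  have key : ∀ x y : ℝ, x ∈ Set.Icc (0:ℝ) L → y ∈ Set.Icc (0:ℝ) L → x ≤ y →
      (∫ u in x..y, h' u)^2 ≤ L * ∫ u in (0:ℝ)..L, (h' u)^2 := by
    intro x y hx hy hxy
    have h1 := cs_interval h' hc hxy
    have h2 : ∫ u in x..y, (h' u)^2 ≤ ∫ u in (0:ℝ)..L, (h' u)^2 := by
      apply intervalIntegral.integral_mono_interval hx.1 hxy hy.2
      · filter_upwards with u; positivity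
      · exact (hc.pow 2).intervalIntegrable 0 L
    have h3 : 0 ≤ ∫ u in x..y, (h' u)^2 :=
      intervalIntegral.integral_nonneg hxy (fun u _ => sq_nonneg _)
    nlinarith [sub_nonneg.2 hxy, hx.1, hy.2]
  have ftc : h t - h s = ∫ u in s..t, h' u := by
    rw [intervalIntegral.integral_eq_sub_of_hasDerivAt (fun x _ => hd x)
      (hc.intervalIntegrable s t)]
  have hb : (h t - h s)^2 ≤ L * ∫ u in (0:ℝ)..L, (h' u)^2 := by
    rw [ftc]
    rcases le_total s t with hst | hst
    · exact key s t hs ht hst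
    · rw [intervalIntegral.integral_symm]
      rw [neg_pow]
      simpa using key t s ht hs hst
  nlinarith [sq_nonneg (h t - 2 * h s)]

/-! ### The 1D core inequality -/

lemma core1d (h h' q : ℝ → ℝ) (hch : Continuous h) (hc : Continuous h')
    (hd : ∀ t, HasDerivAt h (h' t) t) (hq : Continuous q) (hq0 : ∀ u, 0 ≤ q u)
    (G : Set ℝ) (hGm : MeasurableSet G) (hGsub : G ⊆ Set.Icc 0 (2*π))
    (hGmeas : π ≤ (volume G).toReal)
    (M : ℝ) (hM : 0 ≤ M) (hbound : ∀ s ∈ G, (h s)^2 ≤ M * q s) :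
    ∫ t in (0:ℝ)..(2*π), (h t)^2
      ≤ 4*M*(∫ u in (0:ℝ)..(2*π), q u) + 16*π^2*(∫ u in (0:ℝ)..(2*π), (h' u)^2) := by
  have hπ : (0:ℝ) < π := Real.pi_pos
  set D := ∫ u in (0:ℝ)..(2*π), (h' u)^2 with hD
  set Q := ∫ u in (0:ℝ)..(2*π), q u with hQ
  have hD0 : 0 ≤ D := intervalIntegral.integral_nonneg (by linarith) (fun u _ => sq_nonneg _)
  have hvolIcc : volume (Set.Icc (0:ℝ) (2*π)) = ENNReal.ofReal (2*π) := by
    rw [Real.volume_Icc]; norm_num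
  have hGfin : volume G < ⊤ :=
    lt_of_le_of_lt (measure_mono (μ := volume) hGsub) (by rw [hvolIcc]; exact ENNReal.ofReal_lt_top)
  have hvolG_le : (volume G).toReal ≤ 2*π := by
    have : volume G ≤ volume (Set.Icc (0:ℝ) (2*π)) := measure_mono hGsub
    rw [hvolIcc] at this
    have := ENNReal.toReal_mono ENNReal.ofReal_ne_top this
    rwa [ENNReal.toReal_ofReal (by linarith)] at this
  have hIntH2 : IntegrableOn (fun s => (h s)^2) G volume :=
    (((hch.pow 2).integrableOn_Icc (a := 0) (b := 2*π))).mono_set hGsub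
  have hIntq : IntegrableOn q G volume :=
    ((hq.integrableOn_Icc (a := 0) (b := 2*π))).mono_set hGsub
  have hIntqIcc : IntegrableOn q (Set.Icc 0 (2*π)) volume := hq.integrableOn_Icc
  have hGq : ∫ s in G, (h s)^2 ≤ M * Q := by
    have h1 : ∫ s in G, (h s)^2 ≤ ∫ s in G, M * q s := by
      apply setIntegral_mono_on hIntH2 (hIntq.const_mul M) hGm hbound
    have h2 : ∫ s in G, M * q s = M * ∫ s in G, q s := by
      rw [MeasureTheory.integral_const_mul]
    have h3 : ∫ s in G, q s ≤ ∫ s in Set.Icc 0 (2*π), q s := by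
      apply setIntegral_mono_set hIntqIcc
      · filter_upwards with u; exact hq0 u
      · exact Filter.Eventually.of_forall hGsub
    have h4 : ∫ s in Set.Icc (0:ℝ) (2*π), q s = Q := by
      rw [hQ, intervalIntegral.integral_of_le (by linarith : (0:ℝ) ≤ 2*π),
        integral_Icc_eq_integral_Ioc]
    calc ∫ s in G, (h s)^2 ≤ M * ∫ s in G, q s := by rw [← h2]; exact h1
      _ ≤ M * ∫ s in Set.Icc 0 (2*π), q s := by
          apply mul_le_mul_of_nonneg_left h3 hM
      _ = M * Q := by rw [h4]
  have hQ0 : 0 ≤ Q := intervalIntegral.integral_nonneg (by linarith) (fun u _ => hq0 u)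
  have hpt : ∀ t ∈ Set.Icc (0:ℝ) (2*π), (h t)^2 ≤ (2*(M*Q) + 8*π^2*D)/π := by
    intro t ht
    have hstep : ∀ s ∈ G, (h t)^2 ≤ 2*(h s)^2 + 4*π*D := by
      intro s hs
      have := ftc_bound h h' hc hd (by linarith : (0:ℝ) ≤ 2*π) (hGsub hs) ht
      calc (h t)^2 ≤ 2*(h s)^2 + 2*(2*π)*D := this
        _ = 2*(h s)^2 + 4*π*D := by ring
    have hint : (volume G).toReal * (h t)^2 ≤ ∫ s in G, (2*(h s)^2 + 4*π*D) := by
      have h1 : ∫ s in G, (h t)^2 ≤ ∫ s in G, (2*(h s)^2 + 4*π*D) := by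
        apply setIntegral_mono_on (integrableOn_const hGfin.ne)
          ((hIntH2.const_mul 2).add (integrableOn_const hGfin.ne)) hGm hstep
      rw [setIntegral_const, smul_eq_mul, measureReal_def] at h1
      linarith
    have heval : ∫ s in G, (2*(h s)^2 + 4*π*D) = 2*(∫ s in G, (h s)^2) + (volume G).toReal * (4*π*D) := by
      rw [integral_add (hIntH2.const_mul 2) (integrableOn_const hGfin.ne),
        MeasureTheory.integral_const_mul, setIntegral_const, smul_eq_mul, measureReal_def]
    have hcomb : (volume G).toReal * (h t)^2 ≤ 2*(M*Q) + (2*π)*(4*π*D) := by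
      rw [heval] at hint
      have := mul_le_mul_of_nonneg_right hvolG_le (by positivity : (0:ℝ) ≤ 4*π*D)
      nlinarith [hGq]
    have hlow : π * (h t)^2 ≤ (volume G).toReal * (h t)^2 :=
      mul_le_mul_of_nonneg_right hGmeas (sq_nonneg _)
    have hfin := le_trans hlow hcomb
    rw [le_div_iff₀ hπ]
    nlinarith [hfin]
  have : ∫ t in (0:ℝ)..(2*π), (h t)^2 ≤ ∫ t in (0:ℝ)..(2*π), ((2*(M*Q) + 8*π^2*D)/π) := by
    apply intervalIntegral.integral_mono_on (by linarith)
      ((hch.pow 2).intervalIntegrable 0 (2*π)) intervalIntegrable_const hpt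
  rw [intervalIntegral.integral_const, smul_eq_mul] at this
  calc ∫ t in (0:ℝ)..(2*π), (h t)^2 ≤ (2*π - 0) * ((2*(M*Q) + 8*π^2*D)/π) := this
    _ = 4*M*Q + 16*π^2*D := by field_simp; ring

/-! ### Transfer to iterated integrals -/

noncomputable def psi : EuclideanSpace ℝ (Fin 2) ≃ᵐ ℝ × ℝ :=
  (MeasurableEquiv.toLp 2 (Fin 2 → ℝ)).symm.trans MeasurableEquiv.finTwoArrow

lemma psi_apply (y : EuclideanSpace ℝ (Fin 2)) : psi y = (y 0, y 1) := rfl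

lemma psi_mp : MeasurePreserving psi volume volume :=
  (volume_preserving_finTwoArrow ℝ).comp (EuclideanSpace.volume_preserving_symm_measurableEquiv_toLp (Fin 2))

lemma preimage_fund : psi ⁻¹' (Set.Icc (0:ℝ) (2*π) ×ˢ Set.Icc (0:ℝ) (2*π)) = fundDom2 := by
  ext y
  simp only [Set.mem_preimage, psi_apply, Set.mem_prod, fundDom2, Set.mem_setOf_eq]
  constructor
  · rintro ⟨h0, h1⟩ i
    fin_cases i
    · exact h0
    · exact h1
  · intro h
    exact ⟨h 0, h 1⟩

lemma transfer (F : EuclideanSpace ℝ (Fin 2) → ℝ) (hF : Continuous F) :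
    ∫ y in fundDom2, F y = ∫ a in (0:ℝ)..(2*π), ∫ b in (0:ℝ)..(2*π), F (pt a b) := by
  have hπ : (0:ℝ) < π := Real.pi_pos
  have step1 : ∫ y in fundDom2, F y
      = ∫ p in (Set.Icc (0:ℝ) (2*π) ×ˢ Set.Icc (0:ℝ) (2*π)), F (pt p.1 p.2) := by
    have := setIntegral_map_equiv (μ := (volume : Measure (EuclideanSpace ℝ (Fin 2)))) psi
      (fun p => F (pt p.1 p.2)) (Set.Icc (0:ℝ) (2*π) ×ˢ Set.Icc (0:ℝ) (2*π))
    rw [psi_mp.map_eq] at this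
    rw [this, preimage_fund]
    congr 1
    funext y
    rw [psi_apply]
    simp only []
    rw [pt_coords]
  have hFc : Continuous (fun p : ℝ×ℝ => F (pt p.1 p.2)) := by
    apply hF.comp
    unfold pt; fun_prop
  have hcomp : IsCompact (Set.Icc (0:ℝ) (2*π) ×ˢ Set.Icc (0:ℝ) (2*π)) :=
    isCompact_Icc.prod isCompact_Icc
  have hint : IntegrableOn (fun p : ℝ×ℝ => F (pt p.1 p.2))
      (Set.Icc (0:ℝ) (2*π) ×ˢ Set.Icc (0:ℝ) (2*π)) (volume.prod volume) := by
    rw [← Measure.volume_eq_prod]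
    exact hFc.continuousOn.integrableOn_compact hcomp
  have e1 : ∀ (φ : ℝ → ℝ), ∫ x in Set.Icc (0:ℝ) (2*π), φ x = ∫ x in (0:ℝ)..(2*π), φ x := by
    intro φ
    rw [intervalIntegral.integral_of_le (by linarith : (0:ℝ) ≤ 2*π), integral_Icc_eq_integral_Ioc]
  rw [step1, Measure.volume_eq_prod, setIntegral_prod _ hint]
  rw [e1 (fun x => ∫ y in Set.Icc (0:ℝ) (2*π), F (pt x y))]
  apply intervalIntegral.integral_congr
  intro x _
  exact e1 (fun y => F (pt x y))

lemma cont_param (H : EuclideanSpace ℝ (Fin 2) → ℝ) (hH : Continuous H) :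
    Continuous (fun a => ∫ b in (0:ℝ)..(2*π), H (pt a b)) := by
  have hπ : (0:ℝ) < π := Real.pi_pos
  have e1 : ∀ a : ℝ, ∫ b in (0:ℝ)..(2*π), H (pt a b) = ∫ b in Set.Icc (0:ℝ) (2*π), H (pt a b) := by
    intro a
    rw [intervalIntegral.integral_of_le (by linarith : (0:ℝ) ≤ 2*π), integral_Icc_eq_integral_Ioc]
  rw [show (fun a => ∫ b in (0:ℝ)..(2*π), H (pt a b))
      = (fun a => ∫ b in Set.Icc (0:ℝ) (2*π), H (pt a b)) from funext e1]
  apply continuous_parametric_integral_of_continuous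
  · have : Continuous (fun p : ℝ × ℝ => H (pt p.1 p.2)) := by
      apply hH.comp
      unfold pt; fun_prop
    exact this
  · exact isCompact_Icc

/-! ### The good set -/

lemma bad_subset {N : ℕ} (Y : Fin N → EuclideanSpace ℝ (Fin 2)) {ρ : ℝ} (hρ1 : ρ ≤ 1) (a : ℝ)
    {t : ℝ} (ht : t ∈ Set.Icc (0:ℝ) (2*π)) {i : Fin N} (hlt : perDist (pt a t) (Y i) < ρ) :
    ∃ p : Fin N × Fin 3, t ∈ Metric.ball (Y p.1 1 + 2*π*((⌊-(Y p.1 1)/(2*π)⌋ : ℝ) + (p.2 : ℝ))) ρ := by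
  have hπ : (0:ℝ) < π := Real.pi_pos
  obtain ⟨k, hk⟩ := perDist_exists_lt hlt
  have h1 : |t - Y i 1 - 2*π*(k.2 : ℝ)| < ρ := by
    set v : EuclideanSpace ℝ (Fin 2) := pt a t - Y i - (2 * π * (k.1 : ℝ)) • (EuclideanSpace.single 0 (1:ℝ))
      - (2 * π * (k.2 : ℝ)) • (EuclideanSpace.single 1 (1:ℝ)) with hv
    have hnorm := abs_coord_le_norm v 1
    have hv1 : v 1 = t - Y i 1 - 2*π*(k.2 : ℝ) := by
      rw [hv]
      simp [pt, EuclideanSpace.single_apply]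
    rw [hv1] at hnorm
    exact lt_of_le_of_lt hnorm hk
  set b := Y i 1 with hb
  set k₀ : ℤ := ⌊-b/(2*π)⌋ with hk₀
  have hfl1 : (k₀ : ℝ) ≤ -b/(2*π) := Int.floor_le _
  have hfl2 : -b/(2*π) < (k₀ : ℝ) + 1 := Int.lt_floor_add_one _
  have h2π : (0:ℝ) < 2*π := by linarith
  rw [le_div_iff₀ h2π] at hfl1
  rw [div_lt_iff₀ h2π] at hfl2
  set m : ℤ := k.2 with hm
  have habs := abs_lt.1 h1
  have hπ3 : (3:ℝ) < π := Real.pi_gt_three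
  have hm1 : (k₀:ℝ) - 1 < (m:ℝ) := by
    have key : 2*π*((k₀:ℝ) - 1) < 2*π*(m:ℝ) := by nlinarith [ht.1, ht.2, habs.1, habs.2]
    exact lt_of_mul_lt_mul_left key h2π.le
  have hm2 : (m:ℝ) < (k₀:ℝ) + 3 := by
    have key : 2*π*(m:ℝ) < 2*π*((k₀:ℝ) + 3) := by nlinarith [ht.1, ht.2, habs.1, habs.2]
    exact lt_of_mul_lt_mul_left key h2π.le
  have hm1' : k₀ ≤ m := by
    have h' : ((k₀ - 1 : ℤ):ℝ) < (m:ℝ) := by push_cast; linarith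
    have h'' : k₀ - 1 < m := by exact_mod_cast h'
    omega
  have hm2' : m ≤ k₀ + 2 := by
    have h' : (m:ℝ) < ((k₀ + 3 : ℤ):ℝ) := by push_cast; linarith
    have h'' : m < k₀ + 3 := by exact_mod_cast h'
    omega
  refine ⟨⟨i, ⟨(m - k₀).toNat, by omega⟩⟩, ?_⟩
  rw [Metric.mem_ball, Real.dist_eq]
  have hcast : (((m - k₀).toNat : ℕ) : ℝ) = (m:ℝ) - (k₀:ℝ) := by
    have h0 : (0:ℤ) ≤ m - k₀ := by omega
    have h0' : ((m - k₀).toNat : ℤ) = m - k₀ := Int.toNat_of_nonneg h0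
    calc (((m - k₀).toNat : ℕ) : ℝ) = ((((m - k₀).toNat : ℕ) : ℤ) : ℝ) := by norm_cast
      _ = ((m - k₀ : ℤ) : ℝ) := by rw [h0']
      _ = (m:ℝ) - (k₀:ℝ) := by push_cast; ring
  simp only [Fin.val_mk]
  rw [hcast]
  have heq2 : b + 2*π*((k₀:ℝ) + ((m:ℝ) - (k₀:ℝ))) = b + 2*π*(m:ℝ) := by ring
  rw [heq2]
  rw [show t - (b + 2*π*(m:ℝ)) = t - b - 2*π*(m:ℝ) by ring]
  exact h1

lemma good_measurable {N : ℕ} (Y : Fin N → EuclideanSpace ℝ (Fin 2)) (ρ : ℝ) (a : ℝ) :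
    MeasurableSet {t : ℝ | t ∈ Set.Icc (0:ℝ) (2*π) ∧ ∀ i, ρ ≤ perDist (pt a t) (Y i)} := by
  have : {t : ℝ | t ∈ Set.Icc (0:ℝ) (2*π) ∧ ∀ i, ρ ≤ perDist (pt a t) (Y i)}
      = Set.Icc (0:ℝ) (2*π) ∩ ⋂ i, {t | ρ ≤ perDist (pt a t) (Y i)} := by
    ext t; simp [Set.mem_iInter, Set.mem_setOf_eq]
  rw [this]
  apply measurableSet_Icc.inter
  apply MeasurableSet.iInter
  intro i
  exact (isClosed_le continuous_const ((perDist_continuous (Y i)).comp (pt_cont_snd a))).measurableSet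

lemma good_volume {N : ℕ} (Y : Fin N → EuclideanSpace ℝ (Fin 2)) {ρ : ℝ}
    (hρ0 : 0 < ρ) (hρ1 : ρ ≤ 1) (hρN : ρ ≤ π/(6*N+6)) (a : ℝ) :
    π ≤ (volume {t : ℝ | t ∈ Set.Icc (0:ℝ) (2*π) ∧ ∀ i, ρ ≤ perDist (pt a t) (Y i)}).toReal := by
  have hπ : (0:ℝ) < π := Real.pi_pos
  set G := {t : ℝ | t ∈ Set.Icc (0:ℝ) (2*π) ∧ ∀ i, ρ ≤ perDist (pt a t) (Y i)} with hG
  set bad := Set.Icc (0:ℝ) (2*π) \ G with hbad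
  have hGsub : G ⊆ Set.Icc (0:ℝ) (2*π) := fun t ht => ht.1
  have hsub : bad ⊆ ⋃ p : Fin N × Fin 3,
      Metric.ball (Y p.1 1 + 2*π*((⌊-(Y p.1 1)/(2*π)⌋ : ℝ) + (p.2 : ℝ))) ρ := by
    intro t ht
    obtain ⟨htIcc, htG⟩ := ht
    rw [hG, Set.mem_setOf_eq] at htG
    push_neg at htG
    obtain ⟨i, hi⟩ := htG htIcc
    obtain ⟨p, hp⟩ := bad_subset Y hρ1 a htIcc (lt_of_not_ge (by exact fun h => absurd h (not_le.2 hi)))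
    exact Set.mem_iUnion.2 ⟨p, hp⟩
  have hballvol : ∀ p : Fin N × Fin 3,
      volume (Metric.ball (Y p.1 1 + 2*π*((⌊-(Y p.1 1)/(2*π)⌋ : ℝ) + (p.2 : ℝ))) ρ)
        = ENNReal.ofReal (2*ρ) := by
    intro p; rw [Real.volume_ball]
  have hbadvol : (volume bad).toReal ≤ 6*N*ρ := by
    have h1 : volume bad ≤ ∑' p : Fin N × Fin 3, ENNReal.ofReal (2*ρ) := by
      calc volume bad ≤ volume (⋃ p : Fin N × Fin 3,
          Metric.ball (Y p.1 1 + 2*π*((⌊-(Y p.1 1)/(2*π)⌋ : ℝ) + (p.2 : ℝ))) ρ) := measure_mono hsub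
        _ ≤ ∑' p : Fin N × Fin 3, volume (Metric.ball (Y p.1 1 + 2*π*((⌊-(Y p.1 1)/(2*π)⌋ : ℝ) + (p.2 : ℝ))) ρ) :=
            measure_iUnion_le _
        _ = ∑' p : Fin N × Fin 3, ENNReal.ofReal (2*ρ) := tsum_congr hballvol
    have h2 : ∑' _ : Fin N × Fin 3, ENNReal.ofReal (2*ρ) = (N*3 : ℕ) * ENNReal.ofReal (2*ρ) := by
      rw [tsum_fintype, Finset.sum_const, Finset.card_univ]
      simp [Fintype.card_prod, nsmul_eq_mul]
    rw [h2] at h1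
    have hfin : ((N*3 : ℕ) : ENNReal) * ENNReal.ofReal (2*ρ) ≠ ⊤ :=
      ENNReal.mul_ne_top (ENNReal.natCast_ne_top _) ENNReal.ofReal_ne_top
    have h3 := ENNReal.toReal_mono hfin h1
    rw [ENNReal.toReal_mul, ENNReal.toReal_natCast, ENNReal.toReal_ofReal (by linarith)] at h3
    calc (volume bad).toReal ≤ (N*3 : ℕ) * (2*ρ) := h3
      _ = 6*N*ρ := by push_cast; ring
  have h6 : (0:ℝ) < 6*N+6 := by positivity
  rw [le_div_iff₀ h6] at hρN
  have hbadπ : (volume bad).toReal ≤ π := by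
    have : 6*(N:ℝ)*ρ ≤ ρ*(6*N+6) := by nlinarith
    linarith
  have hfinIcc : volume (Set.Icc (0:ℝ) (2*π)) = ENNReal.ofReal (2*π) := by
    rw [Real.volume_Icc]; norm_num
  have hGfin : volume G ≠ ⊤ :=
    ne_of_lt (lt_of_le_of_lt (measure_mono (μ := volume) hGsub) (by rw [hfinIcc]; exact ENNReal.ofReal_lt_top))
  have hbadfin : volume bad ≠ ⊤ := by
    have hss : bad ⊆ Set.Icc (0:ℝ) (2*π) := Set.diff_subset
    exact ne_of_lt (lt_of_le_of_lt (measure_mono (μ := volume) hss) (by rw [hfinIcc]; exact ENNReal.ofReal_lt_top))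
  have hunion : Set.Icc (0:ℝ) (2*π) ⊆ G ∪ bad := by
    intro t ht
    by_cases h : t ∈ G
    · exact Or.inl h
    · exact Or.inr ⟨ht, h⟩
  have h4 : volume (Set.Icc (0:ℝ) (2*π)) ≤ volume G + volume bad :=
    le_trans (measure_mono hunion) (measure_union_le _ _)
  have h5 := ENNReal.toReal_mono (ENNReal.add_ne_top.2 ⟨hGfin, hbadfin⟩) h4
  rw [ENNReal.toReal_add hGfin hbadfin, hfinIcc, ENNReal.toReal_ofReal (by linarith)] at h5
  linarith

theorem stmt6 (ω : EuclideanSpace ℝ (Fin 2) → ℝ) (hcont : Continuous ω)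
    (hper : ∀ (y : EuclideanSpace ℝ (Fin 2)) (i : Fin 2),
      ω (y + (2 * π) • EuclideanSpace.single i (1:ℝ)) = ω y)
    (N : ℕ) (Y : Fin N → EuclideanSpace ℝ (Fin 2))
    (r c C : ℝ) (hr : 0 < r) (hc : 0 < c) (hcC : c ≤ C)
    (hnear : ∀ (i : Fin N) (y : EuclideanSpace ℝ (Fin 2)), perDist y (Y i) ≤ r →
      c * perDist y (Y i) ≤ |ω y| ∧ |ω y| ≤ C * perDist y (Y i))
    (hfar : ∀ y : EuclideanSpace ℝ (Fin 2), (∀ i : Fin N, r ≤ perDist y (Y i)) →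
      c ≤ |ω y| ∧ |ω y| ≤ C) :
    ∃ K > 0, ∀ g : EuclideanSpace ℝ (Fin 2) → ℝ, ContDiff ℝ (⊤ : ℕ∞) g →
      (∀ (y : EuclideanSpace ℝ (Fin 2)) (i : Fin 2),
        g (y + (2 * π) • EuclideanSpace.single i (1:ℝ)) = g y) →
      ∫ y in fundDom2, (g y)^2
        ≤ K * ((∫ y in fundDom2, (ω y)^2 * (g y)^2)
            + ∫ y in fundDom2, ∑ i : Fin 2,
                (fderiv ℝ g y (EuclideanSpace.single i (1:ℝ)))^2) := by
  have hπ : (0:ℝ) < π := Real.pi_pos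
  have h6 : (0:ℝ) < 6*N+6 := by positivity
  set ρ : ℝ := min r (min 1 (π/(6*N+6))) with hρdef
  have hρ0 : 0 < ρ := lt_min hr (lt_min one_pos (by positivity))
  have hρr : ρ ≤ r := min_le_left _ _
  have hρ1 : ρ ≤ 1 := le_trans (min_le_right _ _) (min_le_left _ _)
  have hρN : ρ ≤ π/(6*N+6) := le_trans (min_le_right _ _) (min_le_right _ _)
  set M : ℝ := 1/(c*ρ)^2 with hMdef
  have hM0 : 0 < M := by positivity
  set K : ℝ := max (4*M) (16*π^2) with hK
  have hK0 : 0 < K := lt_of_lt_of_le (by positivity : (0:ℝ) < 16*π^2) (le_max_right _ _)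
  refine ⟨K, hK0, ?_⟩
  intro g hg _hgper
  have hgc : Continuous g := hg.continuous
  have hfderivc : Continuous (fderiv ℝ g) := hg.continuous_fderiv (by simp)
  have hdgc : Continuous (fun y => fderiv ℝ g y (EuclideanSpace.single 1 (1:ℝ))) :=
    hfderivc.clm_apply continuous_const
  have hsumc : Continuous (fun y => ∑ i : Fin 2, (fderiv ℝ g y (EuclideanSpace.single i (1:ℝ)))^2) := by
    apply continuous_finset_sum
    intro i _
    exact (hfderivc.clm_apply continuous_const).pow 2
  have hF1 : Continuous (fun y => (g y)^2) := hgc.pow 2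
  have hF2 : Continuous (fun y => (ω y)^2 * (g y)^2) := by fun_prop
  -- the good-region pointwise bound
  have hkey : ∀ y : EuclideanSpace ℝ (Fin 2), (∀ i, ρ ≤ perDist y (Y i)) →
      (g y)^2 ≤ M * ((ω y)^2 * (g y)^2) := by
    intro y hy
    have hω : c*ρ ≤ |ω y| := by
      by_cases hcase : ∀ i, r ≤ perDist y (Y i)
      · have := (hfar y hcase).1
        nlinarith
      · push_neg at hcase
        obtain ⟨i, hi⟩ := hcase
        have h1 := (hnear i y (le_of_lt hi)).1
        have h2 := hy i
        nlinarith
    have hω2 : (c*ρ)^2 ≤ (ω y)^2 := by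
      rw [← sq_abs (ω y)]
      have h0 : 0 ≤ c*ρ := by positivity
      nlinarith
    have hcρ : (0:ℝ) < (c*ρ)^2 := by positivity
    have hmul : (c*ρ)^2 * (g y)^2 ≤ (ω y)^2 * (g y)^2 :=
      mul_le_mul_of_nonneg_right hω2 (sq_nonneg _)
    rw [hMdef, one_div, inv_mul_eq_div, le_div_iff₀ hcρ]
    nlinarith [hmul]
  -- the per-line core inequality
  have hcore : ∀ a : ℝ,
      (∫ b in (0:ℝ)..(2*π), (g (pt a b))^2)
        ≤ 4*M*(∫ b in (0:ℝ)..(2*π), (ω (pt a b))^2*(g (pt a b))^2)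
          + 16*π^2*(∫ b in (0:ℝ)..(2*π), (fderiv ℝ g (pt a b) (EuclideanSpace.single 1 (1:ℝ)))^2) := by
    intro a
    apply core1d (fun t => g (pt a t))
      (fun t => fderiv ℝ g (pt a t) (EuclideanSpace.single 1 (1:ℝ)))
      (fun t => (ω (pt a t))^2*(g (pt a t))^2)
      (hgc.comp (pt_cont_snd a)) (hdgc.comp (pt_cont_snd a))
      (fun t => ((hg.differentiable (by simp) (pt a t)).hasFDerivAt).comp_hasDerivAt t (hasDerivAt_pt_snd a t))
      (hF2.comp (pt_cont_snd a)) (fun u => by positivity)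
      {t : ℝ | t ∈ Set.Icc (0:ℝ) (2*π) ∧ ∀ i, ρ ≤ perDist (pt a t) (Y i)}
      (good_measurable Y ρ a) (fun t ht => ht.1) (good_volume Y hρ0 hρ1 hρN a)
      M (le_of_lt hM0) (fun s hs => hkey (pt a s) hs.2)
  -- transfer the three integrals
  have tA : (∫ y in fundDom2, (g y)^2)
      = ∫ a in (0:ℝ)..(2*π), ∫ b in (0:ℝ)..(2*π), (g (pt a b))^2 := transfer _ hF1
  have tB : (∫ y in fundDom2, (ω y)^2 * (g y)^2)
      = ∫ a in (0:ℝ)..(2*π), ∫ b in (0:ℝ)..(2*π), (ω (pt a b))^2 * (g (pt a b))^2 := transfer _ hF2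
  have tD : (∫ y in fundDom2, ∑ i : Fin 2, (fderiv ℝ g y (EuclideanSpace.single i (1:ℝ)))^2)
      = ∫ a in (0:ℝ)..(2*π), ∫ b in (0:ℝ)..(2*π),
          ∑ i : Fin 2, (fderiv ℝ g (pt a b) (EuclideanSpace.single i (1:ℝ)))^2 := transfer _ hsumc
  -- continuity of the parametric integrals
  have hΦc := cont_param _ hF1
  have hQc := cont_param _ hF2
  have hDc := cont_param _ (hdgc.pow 2)
  have hSc := cont_param _ hsumc
  -- integrate the core inequality in a
  have step1 : (∫ a in (0:ℝ)..(2*π), ∫ b in (0:ℝ)..(2*π), (g (pt a b))^2)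
      ≤ ∫ a in (0:ℝ)..(2*π),
          (4*M*(∫ b in (0:ℝ)..(2*π), (ω (pt a b))^2*(g (pt a b))^2)
            + 16*π^2*(∫ b in (0:ℝ)..(2*π), (fderiv ℝ g (pt a b) (EuclideanSpace.single 1 (1:ℝ)))^2)) := by
    apply intervalIntegral.integral_mono_on (by linarith)
      (hΦc.intervalIntegrable 0 (2*π))
      (((continuous_const.mul hQc).add (continuous_const.mul hDc)).intervalIntegrable 0 (2*π))
    intro a _
    exact hcore a
  have step2 : (∫ a in (0:ℝ)..(2*π),
        (4*M*(∫ b in (0:ℝ)..(2*π), (ω (pt a b))^2*(g (pt a b))^2)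
          + 16*π^2*(∫ b in (0:ℝ)..(2*π), (fderiv ℝ g (pt a b) (EuclideanSpace.single 1 (1:ℝ)))^2)))
      = 4*M*(∫ a in (0:ℝ)..(2*π), ∫ b in (0:ℝ)..(2*π), (ω (pt a b))^2*(g (pt a b))^2)
        + 16*π^2*(∫ a in (0:ℝ)..(2*π), ∫ b in (0:ℝ)..(2*π), (fderiv ℝ g (pt a b) (EuclideanSpace.single 1 (1:ℝ)))^2) := by
    rw [intervalIntegral.integral_add (f := fun a => 4*M*(∫ b in (0:ℝ)..(2*π), (ω (pt a b))^2*(g (pt a b))^2)) (g := fun a => 16*π^2*(∫ b in (0:ℝ)..(2*π), (fderiv ℝ g (pt a b) (EuclideanSpace.single 1 (1:ℝ)))^2)) ((continuous_const.mul hQc).intervalIntegrable 0 (2*π))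
      ((continuous_const.mul hDc).intervalIntegrable 0 (2*π)),
      intervalIntegral.integral_const_mul, intervalIntegral.integral_const_mul]
  -- the derivative term is bounded by the full gradient term
  have hptw : ∀ y : EuclideanSpace ℝ (Fin 2),
      (fderiv ℝ g y (EuclideanSpace.single 1 (1:ℝ)))^2
        ≤ ∑ i : Fin 2, (fderiv ℝ g y (EuclideanSpace.single i (1:ℝ)))^2 := by
    intro y
    rw [Fin.sum_univ_two]
    nlinarith [sq_nonneg (fderiv ℝ g y (EuclideanSpace.single 0 (1:ℝ)))]
  have step3 : (∫ a in (0:ℝ)..(2*π), ∫ b in (0:ℝ)..(2*π), (fderiv ℝ g (pt a b) (EuclideanSpace.single 1 (1:ℝ)))^2)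
      ≤ ∫ a in (0:ℝ)..(2*π), ∫ b in (0:ℝ)..(2*π),
          ∑ i : Fin 2, (fderiv ℝ g (pt a b) (EuclideanSpace.single i (1:ℝ)))^2 := by
    apply intervalIntegral.integral_mono_on (by linarith)
      (hDc.intervalIntegrable 0 (2*π)) (hSc.intervalIntegrable 0 (2*π))
    intro a _
    apply intervalIntegral.integral_mono_on (by linarith)
      (((hdgc.pow 2).comp (pt_cont_snd a)).intervalIntegrable 0 (2*π))
      ((hsumc.comp (pt_cont_snd a)).intervalIntegrable 0 (2*π))
    intro b _
    exact hptw (pt a b)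
  -- nonnegativity
  have hB0 : 0 ≤ ∫ y in fundDom2, (ω y)^2 * (g y)^2 := by
    rw [tB]
    apply intervalIntegral.integral_nonneg (by linarith)
    intro a _
    apply intervalIntegral.integral_nonneg (by linarith)
    intro b _
    positivity
  have hS0 : 0 ≤ ∫ y in fundDom2, ∑ i : Fin 2, (fderiv ℝ g y (EuclideanSpace.single i (1:ℝ)))^2 := by
    rw [tD]
    apply intervalIntegral.integral_nonneg (by linarith)
    intro a _
    apply intervalIntegral.integral_nonneg (by linarith)
    intro b _
    exact Finset.sum_nonneg (fun i _ => sq_nonneg _)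
  -- put everything together
  have h4M : 4*M ≤ K := le_max_left _ _
  have h16 : 16*π^2 ≤ K := le_max_right _ _
  rw [tA, tB, tD] at *
  calc (∫ a in (0:ℝ)..(2*π), ∫ b in (0:ℝ)..(2*π), (g (pt a b))^2)
      ≤ 4*M*(∫ a in (0:ℝ)..(2*π), ∫ b in (0:ℝ)..(2*π), (ω (pt a b))^2*(g (pt a b))^2)
        + 16*π^2*(∫ a in (0:ℝ)..(2*π), ∫ b in (0:ℝ)..(2*π), (fderiv ℝ g (pt a b) (EuclideanSpace.single 1 (1:ℝ)))^2) := by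
          rw [← step2]; exact step1
    _ ≤ K*(∫ a in (0:ℝ)..(2*π), ∫ b in (0:ℝ)..(2*π), (ω (pt a b))^2*(g (pt a b))^2)
        + K*(∫ a in (0:ℝ)..(2*π), ∫ b in (0:ℝ)..(2*π),
            ∑ i : Fin 2, (fderiv ℝ g (pt a b) (EuclideanSpace.single i (1:ℝ)))^2) := by
          have e1 : 4*M*(∫ a in (0:ℝ)..(2*π), ∫ b in (0:ℝ)..(2*π), (ω (pt a b))^2*(g (pt a b))^2)
              ≤ K*(∫ a in (0:ℝ)..(2*π), ∫ b in (0:ℝ)..(2*π), (ω (pt a b))^2*(g (pt a b))^2) :=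
            mul_le_mul_of_nonneg_right h4M hB0
          have e2 : 16*π^2*(∫ a in (0:ℝ)..(2*π), ∫ b in (0:ℝ)..(2*π), (fderiv ℝ g (pt a b) (EuclideanSpace.single 1 (1:ℝ)))^2)
              ≤ K*(∫ a in (0:ℝ)..(2*π), ∫ b in (0:ℝ)..(2*π),
                  ∑ i : Fin 2, (fderiv ℝ g (pt a b) (EuclideanSpace.single i (1:ℝ)))^2) := by
            calc 16*π^2*(∫ a in (0:ℝ)..(2*π), ∫ b in (0:ℝ)..(2*π), (fderiv ℝ g (pt a b) (EuclideanSpace.single 1 (1:ℝ)))^2)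
                ≤ 16*π^2*(∫ a in (0:ℝ)..(2*π), ∫ b in (0:ℝ)..(2*π),
                    ∑ i : Fin 2, (fderiv ℝ g (pt a b) (EuclideanSpace.single i (1:ℝ)))^2) :=
                  mul_le_mul_of_nonneg_left step3 (by positivity)
              _ ≤ K*(∫ a in (0:ℝ)..(2*π), ∫ b in (0:ℝ)..(2*π),
                    ∑ i : Fin 2, (fderiv ℝ g (pt a b) (EuclideanSpace.single i (1:ℝ)))^2) :=
                  mul_le_mul_of_nonneg_right h16 hS0
          linarith
    _ = K * ((∫ a in (0:ℝ)..(2*π), ∫ b in (0:ℝ)..(2*π), (ω (pt a b))^2*(g (pt a b))^2)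
          + ∫ a in (0:ℝ)..(2*π), ∫ b in (0:ℝ)..(2*π),
              ∑ i : Fin 2, (fderiv ℝ g (pt a b) (EuclideanSpace.single i (1:ℝ)))^2) := by ring
end
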